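/- arXiv:2108.04502 — 6 statements merged into one kernel-verified Lean document; each statement's English description precedes it below -/
import Mathlib

section
/- Let G = ⟨σ⟩ be a finite cyclic group acting on a finite abelian group M, with filtration M₀ = 1, M_{i+1}/M_i = (M/M_i)^G. Then for all i ≥ 1, the map induced by 1-σ gives an injective homomorphism M_{i+1}/M_i → M_i/M_{i-1}. In particular the orders #(M_{i+1}/M_i) form a decreasing sequence in i, and #(M_{i+1}/M_i) ≤ #M^G for all i. -/
/-!
The map `1 - σ` sends `M_{i+1}` into `M_i`, and since `M_i = ker((1-σ)^i)`, an element `x`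
lies in `M_{i+1}` exactly when `(1-σ) x` lies in `M_i`. Hence `1 - σ` descends to a map
`M_{i+2}/M_{i+1} → M_{i+1}/M_i` whose kernel is trivial. The statements about orders
follow by comparing cardinalities along these injections.
-/

/-- The endomorphism `1 - σ` of an abelian group `M`, for `σ` an automorphism. -/
def oneSubSigma {M : Type*} [AddCommGroup M] (σ : AddAut M) : AddMonoid.End M :=
  1 - (show AddMonoid.End M from AddEquiv.toAddMonoidHom σ)

namespace AddMonoid.End

variable {M : Type*} [AddCommGroup M] (φ : AddMonoid.End M)

theorem mem_ker_pow_succ_iff {i : ℕ} {x : M} :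
    x ∈ (φ ^ (i + 1)).ker ↔ φ x ∈ (φ ^ i).ker := by
  rw [pow_succ]
  rfl

abbrev kerPowSubquotient (i : ℕ) : Type _ :=
  (φ ^ (i + 1)).ker ⧸ (φ ^ i).ker.addSubgroupOf (φ ^ (i + 1)).ker

def kerPowSuccRestrict (i : ℕ) : (φ ^ (i + 1)).ker →+ (φ ^ i).ker :=
  (φ.comp (φ ^ (i + 1)).ker.subtype).codRestrict _ fun x => φ.mem_ker_pow_succ_iff.mp x.2

@[simp]
theorem coe_kerPowSuccRestrict (i : ℕ) (x : (φ ^ (i + 1)).ker) :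
    (φ.kerPowSuccRestrict i x : M) = φ x :=
  rfl

def kerPowSubquotientMap (i : ℕ) : φ.kerPowSubquotient (i + 1) →+ φ.kerPowSubquotient i :=
  QuotientAddGroup.map _ _ (φ.kerPowSuccRestrict (i + 1)) fun x hx => by
    simp only [AddSubgroup.mem_comap, AddSubgroup.mem_addSubgroupOf,
      coe_kerPowSuccRestrict] at hx ⊢
    exact φ.mem_ker_pow_succ_iff.mp hx

theorem kerPowSubquotientMap_mk (i : ℕ) (x : (φ ^ (i + 1 + 1)).ker) :
    φ.kerPowSubquotientMap i (QuotientAddGroup.mk x) =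
      QuotientAddGroup.mk (φ.kerPowSuccRestrict (i + 1) x) :=
  rfl

theorem kerPowSubquotientMap_injective (i : ℕ) :
    Function.Injective (φ.kerPowSubquotientMap i) := by
  refine (injective_iff_map_eq_zero _).mpr fun a => ?_
  induction a using QuotientAddGroup.induction_on with
  | H x =>
    simp only [kerPowSubquotientMap_mk, QuotientAddGroup.eq_zero_iff,
      AddSubgroup.mem_addSubgroupOf, coe_kerPowSuccRestrict]
    exact φ.mem_ker_pow_succ_iff.mpr

theorem card_kerPowSubquotient_antitone [Finite M] :
    Antitone fun i => Nat.card (φ.kerPowSubquotient i) :=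
  antitone_nat_of_succ_le fun i =>
    Nat.card_le_card_of_injective _ (φ.kerPowSubquotientMap_injective i)

theorem card_kerPowSubquotient_le_card_ker [Finite M] (i : ℕ) :
    Nat.card (φ.kerPowSubquotient i) ≤ Nat.card φ.ker :=
  calc Nat.card (φ.kerPowSubquotient i)
      _ ≤ Nat.card (φ.kerPowSubquotient 0) := φ.card_kerPowSubquotient_antitone (Nat.zero_le i)
      _ ≤ Nat.card (φ ^ 1).ker :=
        Nat.card_le_card_of_surjective _ (QuotientAddGroup.mk'_surjective _)
      _ = Nat.card φ.ker := by rw [pow_one]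

end AddMonoid.End

theorem stmt2_general {M : Type*} [AddCommGroup M] [Finite M]
    (σ : AddAut M)
    (Mf : ℕ → AddSubgroup M)
    (hMf : ∀ i, Mf i = AddMonoidHom.ker ((oneSubSigma σ) ^ i)) :
    (∀ i, 1 ≤ i →
      ∃ f : (Mf (i + 1) ⧸ (Mf i).addSubgroupOf (Mf (i + 1))) →+
            (Mf i ⧸ (Mf (i - 1)).addSubgroupOf (Mf i)),
        Function.Injective f ∧
        ∀ (x : M) (hx : x ∈ Mf (i + 1)) (hdx : x - σ x ∈ Mf i),
          f (QuotientAddGroup.mk ⟨x, hx⟩) = QuotientAddGroup.mk ⟨x - σ x, hdx⟩) ∧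
    (∀ i, 1 ≤ i →
      Nat.card (Mf (i + 1) ⧸ (Mf i).addSubgroupOf (Mf (i + 1))) ≤
        Nat.card (Mf i ⧸ (Mf (i - 1)).addSubgroupOf (Mf i))) ∧
    (∀ i, Nat.card (Mf (i + 1) ⧸ (Mf i).addSubgroupOf (Mf (i + 1))) ≤
        Nat.card (Mf 1)) := by
  obtain rfl : Mf = fun i => (oneSubSigma σ ^ i).ker := funext hMf
  refine ⟨fun i hi => ?_, fun i hi => ?_, fun i => ?_⟩
  · obtain ⟨j, rfl⟩ := Nat.exists_eq_add_of_le' hi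
    exact ⟨_, (oneSubSigma σ).kerPowSubquotientMap_injective j, fun _ _ _ => rfl⟩
  · obtain ⟨j, rfl⟩ := Nat.exists_eq_add_of_le' hi
    exact (oneSubSigma σ).card_kerPowSubquotient_antitone (Nat.le_succ j)
  · simpa only [pow_one] using (oneSubSigma σ).card_kerPowSubquotient_le_card_ker i

/-- For a cyclic group `G = ⟨σ⟩` acting on a finite abelian group `M`, with the filtration
`M_i = ker((1-σ)^i)` (so `M₁ = M^G` and `M_{i+1}/M_i = (M/M_i)^G`), the map induced by
`1 - σ` gives an injective homomorphism `M_{i+1}/M_i → M_i/M_{i-1}` for `i ≥ 1`; in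
particular the orders `#(M_{i+1}/M_i)` are decreasing in `i` and bounded by `#M^G`. -/
theorem stmt2 {M : Type*} [AddCommGroup M] [Finite M] (n : ℕ) (hn : 0 < n)
    (σ : AddAut M) (hσ : n • σ = 0)
    (Mf : ℕ → AddSubgroup M)
    (hMf : ∀ i, Mf i = AddMonoidHom.ker ((oneSubSigma σ) ^ i)) :
    (∀ i, 1 ≤ i →
      ∃ f : (Mf (i + 1) ⧸ (Mf i).addSubgroupOf (Mf (i + 1))) →+
            (Mf i ⧸ (Mf (i - 1)).addSubgroupOf (Mf i)),
        Function.Injective f ∧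
        ∀ (x : M) (hx : x ∈ Mf (i + 1)) (hdx : x - σ x ∈ Mf i),
          f (QuotientAddGroup.mk ⟨x, hx⟩) = QuotientAddGroup.mk ⟨x - σ x, hdx⟩) ∧
    (∀ i, 1 ≤ i →
      Nat.card (Mf (i + 1) ⧸ (Mf i).addSubgroupOf (Mf (i + 1))) ≤
        Nat.card (Mf i ⧸ (Mf (i - 1)).addSubgroupOf (Mf i))) ∧
    (∀ i, Nat.card (Mf (i + 1) ⧸ (Mf i).addSubgroupOf (Mf (i + 1))) ≤
        Nat.card (Mf 1)) :=
  stmt2_general σ Mf hMf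
end

section
/- Let p be a prime, ζ a primitive p-th root of unity, and n ≥ 0 an integer. Write n = a(p-1) + b with a ≥ 0 and 0 ≤ b ≤ p-2. Then the quotient ℤ_p[ζ]/(1-ζ)^n, viewed as an abelian group, is isomorphic to (ℤ/p^{a+1}ℤ)^b ⊕ (ℤ/p^aℤ)^{p-1-b}. -/
/-!
Put `π = ζ - 1`. Since `Φ_p(X + 1)` is Eisenstein over `ℤ_p`, the powers `1, π, …, π^(p-2)`
form a `ℤ_p`-basis of `ℤ_p[ζ]`, and `p = π^(p-1) · unit`. In these coordinates the ideal
`(π^n)`, `n = a(p-1) + b`, is exactly the lattice of elements whose `j`-th coordinate is divisible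
by `p^(a+1)` for `j < b` and by `p^a` for `j ≥ b`: the lattice lies in `(π^n)` because
`p^e π^j` is a unit times `π^((p-1)e + j)`; conversely it contains `π^n` and is stable under
multiplication by `π`, which shifts coordinates up, the top one wrapping around through
`π^(p-1) = p · unit`. Hence the quotient is `⊕_j ℤ_p/p^(e_j)`, and `ℤ_p/p^k ≅ ℤ/p^k`.
-/

def coordExponent (a b j : ℕ) : ℕ := if j < b then a + 1 else a

section coordExponent
variable {a b j k d : ℕ}

theorem coordExponent_le_succ : coordExponent a b j ≤ a + 1 := by
  unfold coordExponent; split <;> omega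

theorem coordExponent_anti (h : j ≤ k) : coordExponent a b k ≤ coordExponent a b j := by
  unfold coordExponent; split <;> split <;> omega

theorem coordExponent_of_lt (h : j < b) : coordExponent a b j = a + 1 := if_pos h

theorem coordExponent_of_le (h : b ≤ j) : coordExponent a b j = a := if_neg (by omega)

theorem add_le_mul_coordExponent_add (hb : b ≤ d) :
    a * d + b ≤ d * coordExponent a b j + j := by
  unfold coordExponent; split <;> nlinarith

end coordExponent

namespace PowerBasis

variable {A R : Type*} [CommRing A] [CommRing R] [Algebra A R] (pb : PowerBasis A R)

theorem mul_mem_of_forall_gen_mul_mem {M : Submodule A R} (hM : ∀ x ∈ M, pb.gen * x ∈ M)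
    (r : R) : ∀ x ∈ M, r * x ∈ M := by
  have hr : r ∈ Algebra.adjoin A {pb.gen} := pb.adjoin_gen_eq_top ▸ Algebra.mem_top
  induction hr using Algebra.adjoin_induction with
  | mem y hy => rw [Set.mem_singleton_iff.1 hy]; exact hM
  | algebraMap c => intro x hx; rw [← Algebra.smul_def]; exact M.smul_mem c hx
  | add y z _ _ hy hz => intro x hx; rw [add_mul]; exact M.add_mem (hy x hx) (hz x hx)
  | mul y z _ _ hy hz => intro x hx; rw [mul_assoc]; exact hy _ (hz x hx)

noncomputable def coordDvdSubmodule (p : A) (a b : ℕ) : Submodule A R :=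
  (Submodule.pi Set.univ fun j : Fin pb.dim => Ideal.span {p ^ coordExponent a b j}).comap
    pb.basis.equivFun.toLinearMap

variable {pb} {p : A} {a b : ℕ}

theorem mem_coordDvdSubmodule {x : R} :
    x ∈ pb.coordDvdSubmodule p a b ↔
      ∀ j : Fin pb.dim, p ^ coordExponent a b j ∣ pb.basis.repr x j := by
  simp [coordDvdSubmodule, Submodule.mem_pi, Ideal.mem_span_singleton]

theorem smul_mem_coordDvdSubmodule_of_dvd {c : A} (hc : p ^ (a + 1) ∣ c) (y : R) :
    c • y ∈ pb.coordDvdSubmodule p a b :=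
  mem_coordDvdSubmodule.2 fun j => by
    rw [map_smul, Finsupp.smul_apply, smul_eq_mul]
    exact ((pow_dvd_pow p coordExponent_le_succ).trans hc).mul_right _

theorem smul_basis_mem_coordDvdSubmodule {c : A} (j : Fin pb.dim)
    (hc : p ^ coordExponent a b j ∣ c) : c • pb.basis j ∈ pb.coordDvdSubmodule p a b :=
  mem_coordDvdSubmodule.2 fun i => by
    rw [map_smul, pb.basis.repr_self, Finsupp.smul_apply, Finsupp.single_apply]
    split_ifs with h
    · exact h ▸ hc.mul_right 1
    · simp

section
variable (hp : Associated (pb.gen ^ pb.dim) (algebraMap A R p))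
include hp

theorem gen_mul_mem_coordDvdSubmodule (hb : b < pb.dim) {x : R}
    (hx : x ∈ pb.coordDvdSubmodule p a b) : pb.gen * x ∈ pb.coordDvdSubmodule p a b := by
  obtain ⟨u, hu⟩ := hp
  rw [← pb.basis.sum_repr x, Finset.mul_sum]
  refine Submodule.sum_mem _ fun j _ => ?_
  rw [mul_smul_comm, pb.basis_eq_pow, ← pow_succ']
  have hj := mem_coordDvdSubmodule.1 hx j
  rcases (show (j : ℕ) + 1 ≤ pb.dim from j.isLt).lt_or_eq with hlt | hlast
  · simpa [pb.basis_eq_pow] using smul_basis_mem_coordDvdSubmodule ⟨j + 1, hlt⟩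
      ((pow_dvd_pow p (coordExponent_anti (Nat.le_succ j))).trans hj)
  · rw [coordExponent_of_le (by omega)] at hj
    rw [hlast, (Units.eq_mul_inv_iff_mul_eq u).2 hu, ← Algebra.smul_def, smul_smul]
    exact smul_mem_coordDvdSubmodule_of_dvd (pow_succ p a ▸ mul_dvd_mul hj dvd_rfl) _

theorem coordDvdSubmodule_le_span_gen_pow (hb : b ≤ pb.dim) :
    pb.coordDvdSubmodule p a b ≤ (Ideal.span {pb.gen ^ (a * pb.dim + b)}).restrictScalars A := by
  obtain ⟨u, hu⟩ := hp
  intro x hx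
  rw [← pb.basis.sum_repr x]
  refine Submodule.sum_mem _ fun j _ => ?_
  obtain ⟨c, hc⟩ := mem_coordDvdSubmodule.1 hx j
  rw [hc, mul_comm (p ^ _) c, mul_smul, pb.basis_eq_pow]
  refine Submodule.smul_mem _ c ?_
  rw [Algebra.smul_def, map_pow, ← hu, mul_pow, ← pow_mul, Submodule.restrictScalars_mem,
    Ideal.mem_span_singleton]
  exact (pow_dvd_pow _ (add_le_mul_coordExponent_add hb)).trans
    ⟨u ^ coordExponent a b j, by ring⟩

theorem span_gen_pow_le_coordDvdSubmodule (hb : b < pb.dim) :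
    (Ideal.span {pb.gen ^ (a * pb.dim + b)}).restrictScalars A ≤ pb.coordDvdSubmodule p a b := by
  have hgen : pb.gen ^ (a * pb.dim + b) ∈ pb.coordDvdSubmodule p a b := by
    obtain ⟨u, hu⟩ := id hp
    have hpow : pb.gen ^ (a * pb.dim + b) = ↑u⁻¹ ^ a * (p ^ a • pb.basis ⟨b, hb⟩) := by
      rw [pb.basis_eq_pow, Algebra.smul_def, map_pow, ← hu, ← mul_assoc, mul_pow, mul_left_comm,
        ← mul_pow, Units.inv_mul, one_pow, mul_one, ← pow_mul, ← pow_add, mul_comm pb.dim]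
    rw [hpow]
    exact pb.mul_mem_of_forall_gen_mul_mem (fun _ => gen_mul_mem_coordDvdSubmodule hp hb) _ _
      (smul_basis_mem_coordDvdSubmodule _ (by rw [coordExponent_of_le le_rfl]))
  intro x hx
  obtain ⟨r, rfl⟩ := Ideal.mem_span_singleton'.1 hx
  exact pb.mul_mem_of_forall_gen_mul_mem (fun _ => gen_mul_mem_coordDvdSubmodule hp hb) r _ hgen

theorem restrictScalars_span_gen_pow (hb : b < pb.dim) :
    (Ideal.span {pb.gen ^ (a * pb.dim + b)}).restrictScalars A = pb.coordDvdSubmodule p a b :=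
  (span_gen_pow_le_coordDvdSubmodule hp hb).antisymm
    (coordDvdSubmodule_le_span_gen_pow hp hb.le)

noncomputable def quotientSpanGenPowEquiv (hb : b < pb.dim) :
    (R ⧸ Ideal.span {pb.gen ^ (a * pb.dim + b)}) ≃ₗ[A]
      Π j : Fin pb.dim, A ⧸ Ideal.span {p ^ coordExponent a b j} :=
  (Submodule.Quotient.restrictScalarsEquiv A _).symm ≪≫ₗ
    Submodule.quotEquivOfEq _ _ (restrictScalars_span_gen_pow hp hb) ≪≫ₗ
    Submodule.Quotient.equiv _ _ pb.basis.equivFun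
      (Submodule.map_comap_eq_of_surjective pb.basis.equivFun.surjective _) ≪≫ₗ
    Submodule.quotientPi _

end

end PowerBasis

noncomputable def piQuotientCoordExponentEquiv {A : Type*} [CommRing A] (p : A) (a : ℕ)
    {b c d : ℕ} (hd : d = b + c) :
    (Π j : Fin d, A ⧸ Ideal.span {p ^ coordExponent a b j}) ≃ₗ[A]
      (Fin b → A ⧸ Ideal.span {p ^ (a + 1)}) × (Fin c → A ⧸ Ideal.span {p ^ a}) :=
  (LinearEquiv.piCongrLeft A _ (finSumFinEquiv.trans (finCongr hd.symm))).symm ≪≫ₗ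
    LinearEquiv.sumPiEquivProdPi A _ _ _ ≪≫ₗ
    (LinearEquiv.piCongrRight fun i => Submodule.quotEquivOfEq _ _ (by
      simp [coordExponent_of_lt])).prodCongr
    (LinearEquiv.piCongrRight fun i => Submodule.quotEquivOfEq _ _ (by
      simp [coordExponent_of_le]))

open Polynomial in
theorem IsPrimitiveRoot.associated_sub_one_pow_prime {A : Type*} [CommRing A] [IsDomain A]
    {p : ℕ} [hp : Fact p.Prime] {ζ : A} (hζ : IsPrimitiveRoot ζ p) :
    Associated ((ζ - 1) ^ (p - 1)) (p : A) := by
  rw [← eval_one_cyclotomic_prime (R := A) (p := p), cyclotomic_eq_prod_X_sub_primitiveRoots hζ,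
    eval_prod]
  simp only [eval_sub, eval_X, eval_C]
  rw [← Nat.totient_prime hp.out, ← hζ.card_primitiveRoots, ← Finset.prod_const]
  refine Associated.prod _ _ _ fun η hη ↦ ?_
  obtain ⟨i, -, hi, rfl⟩ :=
    hζ.isPrimitiveRoot_iff.1 ((mem_primitiveRoots hp.out.pos).1 hη)
  simpa using (hζ.associated_sub_one_pow_sub_one_of_coprime hi).neg_right

namespace IsPrimitiveRoot

open Polynomial

section
variable {n : ℕ} [NeZero n] {A B : Type*} [CommRing A] [CommRing B] [IsDomain B] [Algebra A B]
  [IsCyclotomicExtension {n} A B] {ζ : B} (hζ : IsPrimitiveRoot ζ n)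
include hζ

theorem adjoin_sub_one_eq_top : Algebra.adjoin A {ζ - 1} = ⊤ := by
  refine top_le_iff.1 ((IsCyclotomicExtension.adjoin_primitive_root_eq_top hζ).ge.trans ?_)
  refine Algebra.adjoin_le (Set.singleton_subset_iff.2 ?_)
  simpa using Subalgebra.add_mem _ (Algebra.self_mem_adjoin_singleton A (ζ - 1))
    (Subalgebra.one_mem _)

end

variable {n : ℕ} [NeZero n] {A K : Type*} [CommRing A] [IsDomain A] [IsIntegrallyClosed A]
  [Field K] [Algebra A K] [IsFractionRing A K] [NeZero (n : A)]
  {ζ : CyclotomicRing n A K} (hζ : IsPrimitiveRoot ζ n)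
include hζ

theorem natDegree_minpoly_sub_one (hirr : Irreducible (cyclotomic n K)) :
    (minpoly A (ζ - 1)).natDegree = n.totient := by
  have := NeZero.of_faithfulSMul A K n
  have hint : IsIntegral A (ζ - 1) :=
    (IsCyclotomicExtension.integral {n} A (CyclotomicRing n A K)).isIntegral _
  have hζK : IsPrimitiveRoot (algebraMap (CyclotomicRing n A K) (CyclotomicField n K) ζ) n :=
    hζ.map_of_injective (CyclotomicRing.adjoin_algebra_injective n A K)
  rw [← (minpoly.monic hint).natDegree_map (algebraMap A K),
    ← minpoly.isIntegrallyClosed_eq_field_fractions K (CyclotomicField n K) hint, map_sub,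
    map_one, ← hζK.subOnePowerBasis_gen K, PowerBasis.natDegree_minpoly, ← PowerBasis.finrank,
    IsCyclotomicExtension.finrank _ hirr]

end IsPrimitiveRoot

namespace PadicInt

open Polynomial

variable (p : ℕ) [hp : Fact p.Prime]

theorem cyclotomic_comp_X_add_one_isEisensteinAt :
    ((cyclotomic p ℤ_[p]).comp (X + 1)).IsEisensteinAt (Ideal.span {(p : ℤ_[p])}) := by
  have hweak := (_root_.cyclotomic_comp_X_add_one_isEisensteinAt p).isWeaklyEisensteinAt.map
    (Int.castRingHom ℤ_[p])
  rw [Polynomial.map_comp, map_cyclotomic, Ideal.submodule_span_eq, Ideal.map_span,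
    Set.image_singleton] at hweak
  refine Monic.isEisensteinAt_of_mem_of_notMem ((cyclotomic.monic p _).comp_X_add_C 1)
    (Ideal.span_singleton_ne_top prime_p.not_isUnit) (fun hn => ?_) ?_
  · simpa using hweak.mem (by simpa using hn)
  · rw [coeff_zero_eq_eval_zero, eval_comp]
    simp only [eval_add, eval_X, eval_one, zero_add, eval_one_cyclotomic_prime,
      Ideal.span_singleton_pow, Ideal.mem_span_singleton]
    nth_rw 2 [← pow_one (p : ℤ_[p])]
    rw [pow_dvd_pow_iff prime_p.ne_zero prime_p.not_isUnit]
    omega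

theorem irreducible_cyclotomic : Irreducible (cyclotomic p ℚ_[p]) := by
  have hcomp : Irreducible ((cyclotomic p ℤ_[p]).comp (X + 1)) := by
    refine (cyclotomic_comp_X_add_one_isEisensteinAt p).irreducible
      ((Ideal.span_singleton_prime prime_p.ne_zero).2 prime_p)
      ((cyclotomic.monic p _).comp_X_add_C 1).isPrimitive ?_
    rw [natDegree_comp, natDegree_cyclotomic, Nat.totient_prime hp.out, ← C_1,
      natDegree_X_add_C, mul_one]
    exact Nat.sub_pos_of_lt hp.out.one_lt
  have hℤ : Irreducible (cyclotomic p ℤ_[p]) := by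
    rw [← MulEquiv.irreducible_iff (algEquivAevalXAddC (1 : ℤ_[p]))]
    simpa [algEquivAevalXAddC, aeval_def, eval₂_eq_eval_map, comp] using hcomp
  rw [← map_cyclotomic _ (algebraMap ℤ_[p] ℚ_[p])]
  exact (cyclotomic.monic p ℤ_[p]).irreducible_iff_irreducible_map_fraction_map.1 hℤ

noncomputable def quotientSpanPowEquivZMod (k : ℕ) :
    ℤ_[p] ⧸ Ideal.span {(p : ℤ_[p]) ^ k} ≃+* ZMod (p ^ k) :=
  (Ideal.quotEquivOfEq (ker_toZModPow k).symm).trans <|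
    RingHom.quotientKerEquivOfSurjective fun x => ⟨(x.val : ℤ_[p]), by simp⟩

end PadicInt

/-- Structure of `ℤ_p[ζ]/(1-ζ)^n` as an abelian group: writing `n = a(p-1) + b` with
`0 ≤ b ≤ p-2`, it is isomorphic to `(ℤ/p^{a+1})^b ⊕ (ℤ/p^a)^{p-1-b}`. Here `ℤ_p[ζ]`
is realized as the cyclotomic ring `CyclotomicRing p ℤ_p ℚ_p` and `ζ` is a primitive
`p`-th root of unity in it. -/
theorem stmt5 (p : ℕ) [hp : Fact p.Prime] (n a b : ℕ)
    (hnab : n = a * (p - 1) + b) (hb : b ≤ p - 2)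
    (ζ : CyclotomicRing p ℤ_[p] ℚ_[p]) (hζ : IsPrimitiveRoot ζ p) :
    Nonempty
      ((CyclotomicRing p ℤ_[p] ℚ_[p] ⧸
          Ideal.span {(1 - ζ) ^ n}) ≃+
        ((Fin b → ZMod (p ^ (a + 1))) × (Fin (p - 1 - b) → ZMod (p ^ a)))) := by
  obtain ⟨pb, hgen, hdim⟩ : ∃ pb : PowerBasis ℤ_[p] (CyclotomicRing p ℤ_[p] ℚ_[p]),
      pb.gen = ζ - 1 ∧ pb.dim = p - 1 :=
    ⟨.ofAdjoinEqTop' ((IsCyclotomicExtension.integral {p} ℤ_[p] _).isIntegral _)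
      hζ.adjoin_sub_one_eq_top, by simp, by
      simp [hζ.natDegree_minpoly_sub_one (PadicInt.irreducible_cyclotomic p),
        Nat.totient_prime hp.out]⟩
  have hassoc : Associated (pb.gen ^ pb.dim) (algebraMap ℤ_[p] _ (p : ℤ_[p])) := by
    rw [hgen, hdim, map_natCast]
    exact hζ.associated_sub_one_pow_prime
  have hspan : Ideal.span {(1 - ζ) ^ n} = Ideal.span {pb.gen ^ (a * pb.dim + b)} := by
    rw [hgen, hdim, ← hnab, ← neg_sub]
    exact Ideal.span_singleton_eq_span_singleton.2 (Associated.refl _).neg_left.pow_pow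
  rw [hspan]
  exact ⟨((pb.quotientSpanGenPowEquiv hassoc (by have := hp.out.two_le; omega)) ≪≫ₗ
    piQuotientCoordExponentEquiv _ a (by omega)).toAddEquiv.trans
    ((AddEquiv.piCongrRight fun _ => (PadicInt.quotientSpanPowEquivZMod p _).toAddEquiv).prodCongr
      (AddEquiv.piCongrRight fun _ => (PadicInt.quotientSpanPowEquivZMod p _).toAddEquiv))⟩
end

section
/- Let p be a prime and G = ⟨σ⟩ cyclic of order p. In the group ring ℤ[G], the norm element ν = 1 + σ + ⋯ + σ^{p-1} satisfies ν = (1-σ)^{p-1} - p·A(σ) for some A(σ) ∈ ℤ[G] with A(σ) ≡ -1 modulo the augmentation ideal (1-σ); in particular A(σ) is invertible in ℤ_p[G]. -/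
/-- The canonical coefficient-extension ring homomorphism `ℤ[G] → ℤ_p[G]`
for `G = ℤ/pℤ` (written multiplicatively). -/
noncomputable def intToPadicGroupRing (p : ℕ) [Fact p.Prime] :
    MonoidAlgebra ℤ (Multiplicative (ZMod p)) →+*
      MonoidAlgebra ℤ_[p] (Multiplicative (ZMod p)) :=
  MonoidAlgebra.liftNCRingHom
    (MonoidAlgebra.singleOneRingHom.comp (Int.castRingHom ℤ_[p]))
    (MonoidAlgebra.of ℤ_[p] (Multiplicative (ZMod p)))
    (fun _ _ => Commute.all _ _)

/-!
Modulo `p` one has `(1 - σ)^p = 1 - σ^p = (1 - σ)(1 + σ + ⋯ + σ^{p-1})`; cancelling `1 - X` in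
`𝔽_p[X]` shows that `p` divides `(1 - σ)^{p-1} - ν`, which defines `A`. Applying the augmentation
`ε` gives `p = -p ε(A)`, so `ε(A) = -1`, and `A + 1 = A - ε(A)` lies in the augmentation ideal,
which for a cyclic group is generated by `1 - σ`.

For invertibility: `ℤ_p[G]` is finite over the local ring `ℤ_p`, so each of its maximal ideals
contains `p`. In the residue field, of characteristic `p`, every element of the `p`-group `G`
maps to `1`, so the residue map factors through `ε`; an element whose augmentation is a unit
therefore lies in no maximal ideal.
-/

open Finset MonoidAlgebra

theorem one_sub_pow_pred_eq_geom_sum {K : Type*} [CommRing K] [IsDomain K] (p : ℕ) [Fact p.Prime]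
    [CharP K p] (x : K) : (1 - x) ^ (p - 1) = ∑ i ∈ range p, x ^ i := by
  have hp := (Fact.out : p.Prime)
  by_cases hx : x = 1
  · subst hx
    simp [zero_pow (Nat.sub_ne_zero_of_lt hp.one_lt)]
  refine mul_left_cancel₀ (sub_ne_zero.2 (Ne.symm hx)) ?_
  rw [← pow_succ', Nat.sub_add_cancel hp.one_le, sub_pow_char, one_pow, mul_neg_geom_sum]

open Polynomial in
theorem natCast_dvd_one_sub_pow_pred_sub_geom_sum {R : Type*} [CommRing R] (p : ℕ) [Fact p.Prime]
    (x : R) : (p : R) ∣ (1 - x) ^ (p - 1) - ∑ i ∈ range p, x ^ i := by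
  have hX : C (p : ℤ) ∣ ((1 - X) ^ (p - 1) - ∑ i ∈ range p, X ^ i : ℤ[X]) := by
    rw [← Ideal.mem_span_singleton, ← Set.image_singleton, ← Ideal.map_span,
      ← ZMod.ker_intCastRingHom, ← Polynomial.ker_mapRingHom, RingHom.mem_ker]
    simp [Polynomial.map_sum, one_sub_pow_pred_eq_geom_sum]
  simpa using map_dvd (aeval x) hX

theorem Finset.sum_univ_eq_sum_range_orderOf_pow {G M : Type*} [LeftCancelMonoid G] [Fintype G]
    [AddCommMonoid M] {σ : G} (hσ : ∀ g, g ∈ Submonoid.powers σ) (f : G → M) :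
    ∑ g, f g = ∑ i ∈ range (orderOf σ), f (σ ^ i) := by
  classical
  have himage : (range (orderOf σ)).image (σ ^ ·) = univ :=
    eq_univ_of_forall fun g => mem_powers_iff_mem_range_orderOf.1 (hσ g)
  rw [← himage, sum_image]
  exact fun i hi j hj => pow_injOn_Iio_orderOf (by simpa using hi) (by simpa using hj)

theorem ZMod.mem_powers_ofAdd_one (n : ℕ) [NeZero n] (g : Multiplicative (ZMod n)) :
    g ∈ Submonoid.powers (Multiplicative.ofAdd 1) :=
  ⟨g.toAdd.val, by simp [← ofAdd_nsmul]⟩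

theorem ZMod.orderOf_ofAdd_one (n : ℕ) : orderOf (Multiplicative.ofAdd (1 : ZMod n)) = n := by
  rw [orderOf_ofAdd_eq_addOrderOf, ZMod.addOrderOf_one]

namespace MonoidAlgebra

noncomputable def augmentation (R G : Type*) [CommSemiring R] [Monoid G] :
    MonoidAlgebra R G →ₐ[R] R :=
  lift R R G 1

@[simp]
theorem augmentation_single {R G : Type*} [CommSemiring R] [Monoid G] (g : G) (r : R) :
    augmentation R G (single g r) = r := by
  simp [augmentation]

theorem augmentation_of {R G : Type*} [CommSemiring R] [Monoid G] (g : G) :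
    augmentation R G (of R G g) = 1 := by
  simp

variable {R G : Type*} [CommRing R] [CommMonoid G]

theorem sub_algebraMap_augmentation_mem {I : Ideal (MonoidAlgebra R G)}
    (hI : ∀ g, of R G g - 1 ∈ I) (x : MonoidAlgebra R G) :
    x - algebraMap R _ (augmentation R G x) ∈ I := by
  have h : Ideal.Quotient.mkₐ R I = (Algebra.ofId R _).comp (augmentation R G) :=
    algHom_ext (fun g => by
      rw [← of_apply, AlgHom.comp_apply, augmentation_of, map_one, Ideal.Quotient.mkₐ_eq_mk]
      exact Ideal.Quotient.eq.2 (hI g)) (Subsingleton.elim _ _)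
  rw [← Ideal.Quotient.eq, Ideal.Quotient.mk_algebraMap]
  exact AlgHom.congr_fun h x

theorem of_sub_one_mem_span_one_sub_of {σ : G} (hσ : ∀ g, g ∈ Submonoid.powers σ) (g : G) :
    of R G g - 1 ∈ Ideal.span {1 - of R G σ} := by
  obtain ⟨n, rfl⟩ := hσ g
  rw [Ideal.mem_span_singleton, map_pow, dvd_sub_comm]
  exact one_sub_dvd_one_sub_pow _ n

theorem isUnit_of_isUnit_augmentation [IsLocalRing R] {G : Type*} [CommGroup G] [Finite G]
    {p : ℕ} [Fact p.Prime] (hG : IsPGroup p G) (hp : (p : R) ∈ IsLocalRing.maximalIdeal R)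
    {x : MonoidAlgebra R G} (hx : IsUnit (augmentation R G x)) : IsUnit x := by
  by_contra hu
  obtain ⟨m, hm, hxm⟩ := exists_max_ideal_of_mem_nonunits hu
  have hpm : (p : MonoidAlgebra R G) ∈ m := by
    have hunder : m.under R = IsLocalRing.maximalIdeal R :=
      IsLocalRing.eq_maximalIdeal (Ideal.IsMaximal.under R m)
    rw [← hunder] at hp
    simpa using hp
  have : m.IsPrime := hm.isPrime
  have : CharP (MonoidAlgebra R G ⧸ m) p := (CharP.charP_iff_prime_eq_zero Fact.out).2 <| by
    rw [← map_natCast (Ideal.Quotient.mk m), Ideal.Quotient.eq_zero_iff_mem]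
    exact hpm
  have hg : ∀ g, of R G g - 1 ∈ m := fun g => by
    obtain ⟨k, hk⟩ := hG g
    rw [← Ideal.Quotient.eq, map_one]
    have h : Ideal.Quotient.mk m (of R G g) ^ (p ^ k * 1) = 1 := by
      rw [mul_one, ← map_pow, ← map_pow, hk, map_one, map_one]
    simpa using (ExpChar.pow_prime_pow_mul_eq_one_iff p k 1 _).1 h
  have halg := m.sub_mem hxm (sub_algebraMap_augmentation_mem hg x)
  rw [sub_sub_cancel] at halg
  exact hm.ne_top (Ideal.eq_top_of_isUnit_mem _ halg (hx.map _))

end MonoidAlgebra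

theorem intToPadicGroupRing_of (p : ℕ) [Fact p.Prime] (g : Multiplicative (ZMod p)) :
    intToPadicGroupRing p (of ℤ _ g) = of ℤ_[p] _ g := by
  simp [intToPadicGroupRing, liftNCRingHom, of_apply, liftNC_single, singleOneRingHom]

theorem augmentation_intToPadicGroupRing (p : ℕ) [Fact p.Prime]
    (x : MonoidAlgebra ℤ (Multiplicative (ZMod p))) :
    augmentation ℤ_[p] _ (intToPadicGroupRing p x) = augmentation ℤ _ x := by
  induction x using MonoidAlgebra.induction_on with
  | of g => rw [intToPadicGroupRing_of, augmentation_of, augmentation_of, Int.cast_one]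
  | add x y hx hy => simp [hx, hy]
  | smul n x hx => simp [hx]

/-- In `ℤ[G]`, `G = ⟨σ⟩` cyclic of order `p`, the norm element
`ν = 1 + σ + ⋯ + σ^{p-1}` satisfies `ν = (1-σ)^{p-1} - p·A(σ)` with
`A(σ) ≡ -1 (mod (1-σ))`; in particular `A(σ)` is invertible in `ℤ_p[G]`. -/
theorem stmt7 (p : ℕ) [hp : Fact p.Prime] :
    ∃ A : MonoidAlgebra ℤ (Multiplicative (ZMod p)),
      (∑ g : Multiplicative (ZMod p), MonoidAlgebra.of ℤ (Multiplicative (ZMod p)) g) =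
        (1 - MonoidAlgebra.of ℤ (Multiplicative (ZMod p)) (Multiplicative.ofAdd 1)) ^ (p - 1)
          - (p : MonoidAlgebra ℤ (Multiplicative (ZMod p))) * A ∧
      A + 1 ∈ Ideal.span
        {1 - MonoidAlgebra.of ℤ (Multiplicative (ZMod p)) (Multiplicative.ofAdd 1)} ∧
      IsUnit (intToPadicGroupRing p A) := by
  set σ := of ℤ (Multiplicative (ZMod p)) (Multiplicative.ofAdd 1)
  have hσ := ZMod.mem_powers_ofAdd_one p
  have hν : ∑ g, of ℤ _ g = ∑ i ∈ range p, σ ^ i := by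
    rw [sum_univ_eq_sum_range_orderOf_pow hσ, ZMod.orderOf_ofAdd_one]
    simp [σ]
  obtain ⟨A, hA⟩ := natCast_dvd_one_sub_pow_pred_sub_geom_sum p σ
  have hνA : ∑ g, of ℤ _ g = (1 - σ) ^ (p - 1) - (p : MonoidAlgebra ℤ _) * A := by
    rw [← hA, hν, sub_sub_cancel]
  have hεA : augmentation ℤ _ A = -1 := by
    have h : (p : ℤ) = -(p * augmentation ℤ _ A) := by
      simpa [σ, zero_pow (Nat.sub_ne_zero_of_lt hp.out.one_lt)]
        using congrArg (augmentation ℤ _) hνA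
    exact mul_left_cancel₀ (Nat.cast_ne_zero.2 hp.out.ne_zero) (by linear_combination h)
  refine ⟨A, hνA, ?_, ?_⟩
  · have h := sub_algebraMap_augmentation_mem (of_sub_one_mem_span_one_sub_of hσ) A
    rwa [hεA, map_neg, map_one (algebraMap ℤ _), sub_neg_eq_add] at h
  · apply isUnit_of_isUnit_augmentation (IsPGroup.of_card (n := 1) (by simp)) PadicInt.p_nonunit
    simp [augmentation_intToPadicGroupRing, hεA]
end

section
/- Let p be a prime, G = ⟨σ⟩ cyclic of order p, and M a finite ℤ_p[G]-module annihilated by the norm ν = 1+σ+⋯+σ^{p-1}. For k ≥ 0 let M^{(k)} = {h ∈ M : h^{p^k} = 1} and let M_i = {h ∈ M : h^{(1-σ)^i} = 1}. Then M^{(k)} = M_{k(p-1)} for all k ≥ 0. -/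
open Finset Polynomial

theorem geom_sum_one_sub_X_eq_X_pow_sub_one (p : ℕ) [Fact p.Prime] :
    ∑ i ∈ range p, (1 - X : (ZMod p)[X]) ^ i = X ^ (p - 1) := by
  have hp : p ≠ 0 := (Fact.out : p.Prime).ne_zero
  refine mul_right_cancel₀ (neg_ne_zero.2 (X_ne_zero (R := ZMod p))) ?_
  calc (∑ i ∈ range p, (1 - X : (ZMod p)[X]) ^ i) * -X
      = (1 - X) ^ p - 1 := by rw [← geom_sum_mul]; ring
    _ = X ^ (p - 1) * -X := by rw [sub_pow_char, mul_neg, pow_sub_one_mul hp]; ring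

theorem exists_X_pow_sub_one_eq_geom_sum_sub {p : ℕ} (hp : p.Prime) :
    ∃ q : ℤ[X],
      (X : ℤ[X]) ^ (p - 1) = ∑ i ∈ range p, (1 - X) ^ i - (p : ℤ[X]) * (1 - X * q) := by
  have := Fact.mk hp
  set f : ℤ[X] := ∑ i ∈ range p, (1 - X) ^ i - X ^ (p - 1) with hf
  have hmod : f.map (Int.castRingHom (ZMod p)) = 0 := by
    simp [f, Polynomial.map_sum, geom_sum_one_sub_X_eq_X_pow_sub_one]
  obtain ⟨h, hfh⟩ : C (p : ℤ) ∣ f := (C_dvd_iff_dvd_coeff _ _).2 fun i =>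
    (ZMod.intCast_zmod_eq_zero_iff_dvd _ _).1 <| by
      simpa using congrArg (coeff · i) hmod
  have hh0 : h.coeff 0 = 1 := by
    have hf0 : f.eval 0 = p := by
      simp [f, eval_finsetSum, zero_pow (Nat.sub_ne_zero_of_lt hp.one_lt)]
    rw [hfh, eval_mul, eval_C] at hf0
    rw [coeff_zero_eq_eval_zero]
    exact (mul_eq_left₀ (by exact_mod_cast hp.ne_zero)).1 hf0
  obtain ⟨q, hq⟩ : X ∣ 1 - h := X_dvd_iff.2 (by simp [hh0])
  refine ⟨q, ?_⟩
  rw [← hq, sub_sub_cancel, ← C_eq_natCast, ← hfh, hf]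
  ring

theorem exists_pow_sub_one_eq_of_geom_sum_one_sub_eq_zero {R : Type*} [Ring R] {p : ℕ}
    (hp : p.Prime) {t : R} (ht : ∑ i ∈ range p, (1 - t) ^ i = 0) :
    ∃ r : R, Commute t r ∧ t ^ (p - 1) = -(p * (1 - t * r)) := by
  obtain ⟨q, hq⟩ := exists_X_pow_sub_one_eq_geom_sum_sub hp
  refine ⟨aeval t q, by simpa using (commute_X q).map (aeval t), ?_⟩
  simpa [ht] using congrArg (aeval t) hq

namespace AddMonoid.End

variable {M : Type*} [AddCommGroup M]

theorem injective_one_sub_of_forall_exists_pow_apply_eq_zero {n : AddMonoid.End M}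
    (hn : ∀ x, ∃ m, (n ^ m) x = 0) : Function.Injective ⇑(1 - n) := by
  refine (injective_iff_map_eq_zero _).2 fun y hy => ?_
  have hfix : n y = y := (sub_eq_zero.1 hy).symm
  obtain ⟨m, hm⟩ := hn y
  rwa [coe_pow, Function.iterate_fixed hfix] at hm

theorem exists_pow_apply_eq_zero_mul_of_commute {a b : AddMonoid.End M} (hab : Commute a b)
    (ha : ∀ x, ∃ m, (a ^ m) x = 0) (x : M) : ∃ m, ((a * b) ^ m) x = 0 := by
  obtain ⟨m, hm⟩ := ha x
  exact ⟨m, by rw [hab.eq, hab.symm.mul_pow, coe_mul, Function.comp_apply, hm, map_zero]⟩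

theorem nsmul_pow_eq_zero_iff_pow_mul_apply_eq_zero {p : ℕ} {t r : AddMonoid.End M}
    (htr : Commute t r) (ht : t ^ (p - 1) = -(p * (1 - t * r)))
    (htors : ∀ x : M, ∃ j : ℕ, p ^ j • x = 0) (k : ℕ) (x : M) :
    p ^ k • x = 0 ↔ (t ^ (k * (p - 1))) x = 0 := by
  set w : AddMonoid.End M := -(1 - t * r)
  have hpow (k : ℕ) (x : M) : (t ^ (k * (p - 1))) x = (w ^ k) (p ^ k • x) := by
    rw [mul_comm, pow_mul, ht, ← mul_neg, (Nat.cast_commute p w).mul_pow,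
      ((Nat.cast_commute p w).pow_pow k k).eq, coe_mul, Function.comp_apply, ← Nat.cast_pow,
      natCast_apply]
  have hnil (x : M) : ∃ m, (t ^ m) x = 0 := by
    obtain ⟨j, hj⟩ := htors x
    exact ⟨j * (p - 1), by rw [hpow, hj, map_zero]⟩
  have hw : Function.Injective (w ^ k) := by
    rw [coe_pow]
    exact (neg_injective.comp (injective_one_sub_of_forall_exists_pow_apply_eq_zero
      (exists_pow_apply_eq_zero_mul_of_commute htr hnil))).iterate k
  rw [hpow]
  exact ⟨fun h => by rw [h, map_zero], fun h => (injective_iff_map_eq_zero _).1 hw _ h⟩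

end AddMonoid.End

theorem one_sub_oneSubSigma_pow_apply {M : Type*} [AddCommGroup M] (σ : AddAut M) (i : ℕ)
    (x : M) : ((1 - oneSubSigma σ) ^ i) x = (i • σ) x := by
  induction i generalizing x with
  | zero => rfl
  | succ i ih =>
    rw [pow_succ, AddMonoid.End.coe_mul, Function.comp_apply, ih, succ_nsmul, AddAut.add_apply]
    exact congrArg _ (sub_sub_cancel x (σ x))

theorem stmt8_general {M : Type*} [AddCommGroup M] (p : ℕ) (hp : p.Prime)
    (σ : AddAut M)
    (hpgrp : ∀ x : M, ∃ j : ℕ, p ^ j • x = 0)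
    (hν : ∀ x : M, ∑ i ∈ Finset.range p, (i • σ) x = 0) :
    ∀ (k : ℕ) (x : M), p ^ k • x = 0 ↔ ((oneSubSigma σ) ^ (k * (p - 1))) x = 0 := by
  have hnorm : ∑ i ∈ range p, (1 - oneSubSigma σ) ^ i = 0 := by
    ext x
    exact (AddMonoidHom.finsetSum_apply _ _ x).trans
      ((sum_congr rfl fun i _ => one_sub_oneSubSigma_pow_apply σ i x).trans (hν x))
  obtain ⟨r, hr, ht⟩ := exists_pow_sub_one_eq_of_geom_sum_one_sub_eq_zero hp hnorm
  exact AddMonoid.End.nsmul_pow_eq_zero_iff_pow_mul_apply_eq_zero hr ht hpgrp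

/-- For a finite `ℤ_p[G]`-module `M` (`G = ⟨σ⟩` of order `p`) annihilated by the norm
`ν = 1 + σ + ⋯ + σ^{p-1}`, the `p^k`-torsion subgroup `M^{(k)}` coincides with the
filtration step `M_{k(p-1)} = ker((1-σ)^{k(p-1)})`. -/
theorem stmt8 {M : Type*} [AddCommGroup M] [Finite M] (p : ℕ) (hp : p.Prime)
    (σ : AddAut M) (hσ : p • σ = 0)
    (hpgrp : ∀ x : M, ∃ j : ℕ, p ^ j • x = 0)
    (hν : ∀ x : M, ∑ i ∈ Finset.range p, (i • σ) x = 0) :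
    ∀ (k : ℕ) (x : M), p ^ k • x = 0 ↔ ((oneSubSigma σ) ^ (k * (p - 1))) x = 0 :=
  stmt8_general p hp σ hpgrp hν
end

section
/- Let p be a prime, G = ⟨σ⟩ cyclic of order p, and M a finite ℤ_p[G]-module with filtration M_i = ker((1-σ)^i) and n the least integer with M_n = M. Assume #M₁ = p (where M₁ = M^G). Then for every k ≥ 1 there is an exact sequence 1 → (M₁ ∩ M^{p^{k-1}})/(M₁ ∩ M^{p^k}) → M^{p^{k-1}}/M^{p^k} → M_{n-1}^{p^{k-1}}/M_{n-1}^{p^k} → 1, where the right-hand map is induced by 1-σ. -/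
/-- The subgroup `q·S` of `q`-th "powers" (multiples) of a subgroup `S`. -/
def Ppow {M : Type*} [AddCommGroup M] (S : AddSubgroup M) (q : ℕ) : AddSubgroup M :=
  S.map (show AddMonoid.End M from (q : AddMonoid.End M))

/-!
Since `(1 - σ)ⁿ = 0`, the map `D = 1 - σ` sends `M` into `M_{n-1}`. Its kernel `M₁` has order `p`,
so its image has index `p` in `M`; as `M_{n-1}` is a proper subgroup containing the image,
`D M = M_{n-1}`, and hence `D (p^j M) = p^j M_{n-1}` for every `j`. The exact sequence is then an
instance of the general one `(ker φ ⊓ P)/(ker φ ⊓ P') → P/P' → φ(P)/φ(P') → 0` for `P' ≤ P`.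
-/

section Ppow

variable {M N : Type*} [AddCommGroup M] [AddCommGroup N]

lemma mem_Ppow_iff {S : AddSubgroup M} {q : ℕ} {y : M} : y ∈ Ppow S q ↔ ∃ x ∈ S, q • x = y :=
  AddSubgroup.mem_map

lemma Ppow_le_Ppow_of_dvd (S : AddSubgroup M) {a b : ℕ} (h : a ∣ b) : Ppow S b ≤ Ppow S a := by
  obtain ⟨c, rfl⟩ := h
  intro y hy
  obtain ⟨x, hx, rfl⟩ := mem_Ppow_iff.mp hy
  exact mem_Ppow_iff.mpr ⟨c • x, S.nsmul_mem hx c, by rw [smul_smul]⟩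

lemma map_Ppow (φ : M →+ N) (S : AddSubgroup M) (q : ℕ) :
    (Ppow S q).map φ = Ppow (S.map φ) q := by
  ext y
  simp only [AddSubgroup.mem_map, mem_Ppow_iff]
  constructor
  · rintro ⟨_, ⟨x, hx, rfl⟩, rfl⟩
    exact ⟨φ x, ⟨x, hx, rfl⟩, (map_nsmul φ q x).symm⟩
  · rintro ⟨_, ⟨x, hx, rfl⟩, rfl⟩
    exact ⟨q • x, ⟨x, hx, rfl⟩, map_nsmul φ q x⟩

end Ppow

section Subquotient

variable {M N : Type*} [AddCommGroup M] [AddCommGroup N] (φ : M →+ N)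
  {P P' : AddSubgroup M} {Q Q' : AddSubgroup N}

def subquotientMap (hQ : P.map φ ≤ Q) (hQ' : P'.map φ ≤ Q') :
    P ⧸ P'.addSubgroupOf P →+ Q ⧸ Q'.addSubgroupOf Q :=
  QuotientAddGroup.map _ _ ((φ.comp P.subtype).codRestrict Q fun x => hQ ⟨x, x.2, rfl⟩)
    fun x hx => hQ' ⟨x, hx, rfl⟩

lemma subquotientMap_mk (hQ : P.map φ ≤ Q) (hQ' : P'.map φ ≤ Q') (x : M) (hx : x ∈ P)
    (hφx : φ x ∈ Q) :
    subquotientMap φ hQ hQ' (QuotientAddGroup.mk ⟨x, hx⟩) = QuotientAddGroup.mk ⟨φ x, hφx⟩ :=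
  rfl

lemma subquotientMap_surjective (hQ : P.map φ ≤ Q) (hQ' : P'.map φ ≤ Q') (h : Q ≤ P.map φ) :
    Function.Surjective (subquotientMap φ hQ hQ') := by
  intro c
  induction c using QuotientAddGroup.induction_on with | H y => ?_
  obtain ⟨x, hx, hxy⟩ := h y.2
  exact ⟨QuotientAddGroup.mk ⟨x, hx⟩, congrArg QuotientAddGroup.mk (Subtype.ext hxy)⟩

variable (P P')

lemma inf_map_id_le : (φ.ker ⊓ P).map (AddMonoidHom.id M) ≤ P := by
  simp

lemma subquotientMap_id_injective :
    Function.Injective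
      (subquotientMap (AddMonoidHom.id M) (inf_map_id_le φ P) (inf_map_id_le φ P')) := by
  rw [injective_iff_map_eq_zero]
  intro c h
  induction c using QuotientAddGroup.induction_on with | H x => ?_
  obtain ⟨x, hx⟩ := x
  rw [subquotientMap_mk _ _ _ x hx hx.2, QuotientAddGroup.eq_zero_iff,
    AddSubgroup.mem_addSubgroupOf] at h
  exact (QuotientAddGroup.eq_zero_iff _).mpr ⟨hx.1, h⟩

variable {P P'} in
lemma ker_subquotientMap_eq_range (hP' : P' ≤ P) (hQ : P.map φ ≤ Q) (hQ' : P'.map φ ≤ Q')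
    (h : Q' ≤ P'.map φ) :
    (subquotientMap φ hQ hQ').ker =
      (subquotientMap (AddMonoidHom.id M) (inf_map_id_le φ P) (inf_map_id_le φ P')).range := by
  ext c
  induction c using QuotientAddGroup.induction_on with | H x => ?_
  obtain ⟨x, hx⟩ := x
  rw [AddMonoidHom.mem_ker, subquotientMap_mk _ _ _ x hx (hQ ⟨x, hx, rfl⟩),
    QuotientAddGroup.eq_zero_iff, AddSubgroup.mem_addSubgroupOf]
  constructor
  · intro hφx
    obtain ⟨y, hy, hxy⟩ := h hφx
    have hxy' : x - y ∈ φ.ker ⊓ P := ⟨by simp [hxy], P.sub_mem hx (hP' hy)⟩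
    refine ⟨QuotientAddGroup.mk ⟨x - y, hxy'⟩, ?_⟩
    rw [subquotientMap_mk _ _ _ _ hxy' hxy'.2, QuotientAddGroup.eq, AddSubgroup.mem_addSubgroupOf]
    simpa using hy
  · rintro ⟨c, hc⟩
    induction c using QuotientAddGroup.induction_on with | H z => ?_
    obtain ⟨z, hz⟩ := z
    rw [subquotientMap_mk _ _ _ z hz hz.2, QuotientAddGroup.eq,
      AddSubgroup.mem_addSubgroupOf] at hc
    have hφ : φ (-z + x) = φ x := by simp [AddMonoidHom.mem_ker.mp hz.1]
    exact hQ' ⟨-z + x, hc, hφ⟩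

end Subquotient

section Filtration

variable {M : Type*} [AddCommGroup M]

lemma range_eq_of_card_ker_eq_prime [Finite M] {φ : M →+ M} {p : ℕ} (hp : p.Prime)
    (hker : Nat.card φ.ker = p) {K : AddSubgroup M} (hK : φ.range ≤ K) (hK' : K ≠ ⊤) :
    φ.range = K := by
  have hindex : φ.range.index = p := hker ▸ AddSubgroup.index_range
  have hKindex : K.index = p :=
    ((Nat.dvd_prime hp).mp (hindex ▸ AddSubgroup.index_dvd_of_le hK)).resolve_left
      (mt AddSubgroup.index_eq_one.mp hK')
  by_contra hne
  have := AddSubgroup.index_strictAnti (lt_of_le_of_ne hK hne)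
  omega

lemma range_le_ker_pow_pred {f : AddMonoid.End M} {n : ℕ} (hn : (f ^ n).ker = ⊤) :
    f.range ≤ (f ^ (n - 1)).ker := by
  rintro _ ⟨x, rfl⟩
  have hx : x ∈ (f ^ n).ker := hn ▸ AddSubgroup.mem_top x
  cases n with
  | zero => simp_all
  | succ n => rw [pow_succ] at hx; exact hx

end Filtration

theorem stmt10_general {M : Type*} [AddCommGroup M] [Finite M] (p : ℕ) (hp : p.Prime)
    (σ : AddAut M)
    (hM1 : Nat.card (AddMonoidHom.ker (oneSubSigma σ)) = p)
    (n : ℕ) (hn : AddMonoidHom.ker ((oneSubSigma σ) ^ n) = ⊤)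
    (hmin : ∀ m < n, AddMonoidHom.ker ((oneSubSigma σ) ^ m) ≠ ⊤)
    (k : ℕ) :
    ∃ (f : (↥(AddMonoidHom.ker (oneSubSigma σ) ⊓ Ppow (⊤ : AddSubgroup M) (p ^ (k - 1))) ⧸
            (AddMonoidHom.ker (oneSubSigma σ) ⊓ Ppow (⊤ : AddSubgroup M) (p ^ k)).addSubgroupOf
              (AddMonoidHom.ker (oneSubSigma σ) ⊓ Ppow (⊤ : AddSubgroup M) (p ^ (k - 1)))) →+
          (↥(Ppow (⊤ : AddSubgroup M) (p ^ (k - 1))) ⧸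
            (Ppow (⊤ : AddSubgroup M) (p ^ k)).addSubgroupOf
              (Ppow (⊤ : AddSubgroup M) (p ^ (k - 1)))))
      (g : (↥(Ppow (⊤ : AddSubgroup M) (p ^ (k - 1))) ⧸
            (Ppow (⊤ : AddSubgroup M) (p ^ k)).addSubgroupOf
              (Ppow (⊤ : AddSubgroup M) (p ^ (k - 1)))) →+
          (↥(Ppow (AddMonoidHom.ker ((oneSubSigma σ) ^ (n - 1))) (p ^ (k - 1))) ⧸
            (Ppow (AddMonoidHom.ker ((oneSubSigma σ) ^ (n - 1))) (p ^ k)).addSubgroupOf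
              (Ppow (AddMonoidHom.ker ((oneSubSigma σ) ^ (n - 1))) (p ^ (k - 1))))),
      Function.Injective f ∧ Function.Surjective g ∧
      AddMonoidHom.ker g = AddMonoidHom.range f ∧
      (∀ (x : M) (hx : x ∈ AddMonoidHom.ker (oneSubSigma σ) ⊓
            Ppow (⊤ : AddSubgroup M) (p ^ (k - 1)))
          (hx' : x ∈ Ppow (⊤ : AddSubgroup M) (p ^ (k - 1))),
        f (QuotientAddGroup.mk ⟨x, hx⟩) = QuotientAddGroup.mk ⟨x, hx'⟩) ∧
      (∀ (x : M) (hx : x ∈ Ppow (⊤ : AddSubgroup M) (p ^ (k - 1)))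
          (hdx : (oneSubSigma σ) x ∈
            Ppow (AddMonoidHom.ker ((oneSubSigma σ) ^ (n - 1))) (p ^ (k - 1))),
        g (QuotientAddGroup.mk ⟨x, hx⟩) =
          QuotientAddGroup.mk ⟨(oneSubSigma σ) x, hdx⟩) := by
  set D := oneSubSigma σ
  have hn0 : n ≠ 0 := by
    rintro rfl
    have : Subsingleton M := ⟨fun x y =>
      sub_eq_zero.mp (hn ▸ AddSubgroup.mem_top (x - y) : x - y ∈ (D ^ 0).ker)⟩
    exact hp.one_lt.ne' (hM1 ▸ Nat.card_of_subsingleton (0 : D.ker))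
  have hrange : D.range = AddMonoidHom.ker (D ^ (n - 1)) :=
    range_eq_of_card_ker_eq_prime hp hM1 (range_le_ker_pow_pred hn) (hmin _ (by omega))
  have hmap (q : ℕ) : (Ppow ⊤ q).map D = Ppow (AddMonoidHom.ker (D ^ (n - 1))) q :=
    (map_Ppow D ⊤ q).trans (congrArg (Ppow · q) ((AddMonoidHom.range_eq_map D).symm.trans hrange))
  have hle : Ppow (⊤ : AddSubgroup M) (p ^ k) ≤ Ppow ⊤ (p ^ (k - 1)) :=
    Ppow_le_Ppow_of_dvd ⊤ (pow_dvd_pow p (k.sub_le 1))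
  exact ⟨_, subquotientMap D (hmap _).le (hmap _).le, subquotientMap_id_injective D _ _,
    subquotientMap_surjective _ _ _ (hmap _).ge,
    ker_subquotientMap_eq_range _ hle _ _ (hmap _).ge, fun _ _ _ => rfl, fun _ _ _ => rfl⟩

/-- Lemma on the filtration: for `G = ⟨σ⟩` of order `p` acting on a finite abelian
`p`-group `M` with `#M^G = p` and `n` least with `ker((1-σ)^n) = M`, for every `k ≥ 1`
there is an exact sequence
`1 → (M₁∩M^{p^{k-1}})/(M₁∩M^{p^k}) → M^{p^{k-1}}/M^{p^k} → M_{n-1}^{p^{k-1}}/M_{n-1}^{p^k} → 1`,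
the first map induced by inclusion and the second by `1-σ` (here `M_{n-1} = ker((1-σ)^{n-1})`). -/
theorem stmt10 {M : Type*} [AddCommGroup M] [Finite M] (p : ℕ) (hp : p.Prime)
    (σ : AddAut M) (hσ : p • σ = 0)
    (hpgrp : ∀ x : M, ∃ j : ℕ, p ^ j • x = 0)
    (hM1 : Nat.card (AddMonoidHom.ker (oneSubSigma σ)) = p)
    (n : ℕ) (hn : AddMonoidHom.ker ((oneSubSigma σ) ^ n) = ⊤)
    (hmin : ∀ m < n, AddMonoidHom.ker ((oneSubSigma σ) ^ m) ≠ ⊤)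
    (k : ℕ) (hk : 1 ≤ k) :
    ∃ (f : (↥(AddMonoidHom.ker (oneSubSigma σ) ⊓ Ppow (⊤ : AddSubgroup M) (p ^ (k - 1))) ⧸
            (AddMonoidHom.ker (oneSubSigma σ) ⊓ Ppow (⊤ : AddSubgroup M) (p ^ k)).addSubgroupOf
              (AddMonoidHom.ker (oneSubSigma σ) ⊓ Ppow (⊤ : AddSubgroup M) (p ^ (k - 1)))) →+
          (↥(Ppow (⊤ : AddSubgroup M) (p ^ (k - 1))) ⧸
            (Ppow (⊤ : AddSubgroup M) (p ^ k)).addSubgroupOf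
              (Ppow (⊤ : AddSubgroup M) (p ^ (k - 1)))))
      (g : (↥(Ppow (⊤ : AddSubgroup M) (p ^ (k - 1))) ⧸
            (Ppow (⊤ : AddSubgroup M) (p ^ k)).addSubgroupOf
              (Ppow (⊤ : AddSubgroup M) (p ^ (k - 1)))) →+
          (↥(Ppow (AddMonoidHom.ker ((oneSubSigma σ) ^ (n - 1))) (p ^ (k - 1))) ⧸
            (Ppow (AddMonoidHom.ker ((oneSubSigma σ) ^ (n - 1))) (p ^ k)).addSubgroupOf
              (Ppow (AddMonoidHom.ker ((oneSubSigma σ) ^ (n - 1))) (p ^ (k - 1))))),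
      Function.Injective f ∧ Function.Surjective g ∧
      AddMonoidHom.ker g = AddMonoidHom.range f ∧
      (∀ (x : M) (hx : x ∈ AddMonoidHom.ker (oneSubSigma σ) ⊓
            Ppow (⊤ : AddSubgroup M) (p ^ (k - 1)))
          (hx' : x ∈ Ppow (⊤ : AddSubgroup M) (p ^ (k - 1))),
        f (QuotientAddGroup.mk ⟨x, hx⟩) = QuotientAddGroup.mk ⟨x, hx'⟩) ∧
      (∀ (x : M) (hx : x ∈ Ppow (⊤ : AddSubgroup M) (p ^ (k - 1)))
          (hdx : (oneSubSigma σ) x ∈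
            Ppow (AddMonoidHom.ker ((oneSubSigma σ) ^ (n - 1))) (p ^ (k - 1))),
        g (QuotientAddGroup.mk ⟨x, hx⟩) =
          QuotientAddGroup.mk ⟨(oneSubSigma σ) x, hdx⟩) :=
  stmt10_general p hp σ hM1 n hn hmin k
end

section
/- Let p be a prime, G = ⟨σ⟩ cyclic of order p, and M a finite ℤ_p[G]-module such that #M^G = p, M^ν ≠ 1, and the least n with ker((1-σ)^n) = M satisfies n > p. Then the p-rank of M equals the p-rank of M_{n-1} = (1-σ)M, which equals p-1. -/
open Finset Polynomial

theorem Polynomial.exists_sum_one_sub_X_pow_eq {p : ℕ} (hp : p.Prime) :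
    ∃ e : ℤ[X], ∑ k ∈ range p, (1 - X) ^ k = X ^ (p - 1) + C (p : ℤ) * (1 - X * e) := by
  have : Fact p.Prime := ⟨hp⟩
  set q : ℤ[X] := ∑ k ∈ range p, (1 - X) ^ k - X ^ (p - 1) with hq
  -- `(1 - X)^p = 1 - X^p` modulo `p`, so there the geometric sum is `X^(p-1)`
  have hmod : q.map (Int.castRingHom (ZMod p)) = 0 := by
    have hgeom := geom_sum_mul_neg (1 - X : (ZMod p)[X]) p
    rw [sub_pow_char, one_pow, sub_sub_cancel, sub_sub_cancel,
      ← pow_sub_one_mul hp.ne_zero] at hgeom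
    simp only [hq, Polynomial.map_sub, Polynomial.map_sum, Polynomial.map_pow, Polynomial.map_one,
      Polynomial.map_X, mul_right_cancel₀ X_ne_zero hgeom, sub_self]
  obtain ⟨c, hc⟩ : C (p : ℤ) ∣ q := by
    refine C_dvd_iff_dvd_coeff _ _ |>.mpr fun i => ?_
    rw [← ZMod.intCast_zmod_eq_zero_iff_dvd, ← eq_intCast (Int.castRingHom (ZMod p)),
      ← coeff_map, hmod, coeff_zero]
  obtain ⟨e, he⟩ : X ∣ 1 - c := by
    have hc0 : c.eval 0 = 1 := by
      simpa [hq, eval_finsetSum, zero_pow (Nat.sub_ne_zero_of_lt hp.one_lt), hp.ne_zero] using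
        congrArg (eval 0) hc
    rw [X_dvd_iff, coeff_sub, coeff_one_zero, coeff_zero_eq_eval_zero, hc0, sub_self]
  exact ⟨e, by rw [← he, sub_sub_cancel, ← hc, hq, add_sub_cancel]⟩

theorem exists_unit_sum_one_sub_pow_eq {R : Type*} [Ring R] {p : ℕ} (hp : p.Prime) {τ : R}
    (hτ : IsNilpotent τ) :
    ∃ w : Rˣ, ∑ k ∈ range p, (1 - τ) ^ k = τ ^ (p - 1) + p * w := by
  obtain ⟨e, he⟩ := Polynomial.exists_sum_one_sub_X_pow_eq hp
  have hcomm : Commute τ (aeval τ e) := by simpa using (Commute.all X e).map (aeval τ)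
  have hunit : IsUnit (1 - τ * aeval τ e) := (hcomm.isNilpotent_mul_right hτ).isUnit_one_sub
  exact ⟨hunit.unit, by simpa [map_sum] using congrArg (aeval τ) he⟩

namespace AddMonoid.End

variable {M : Type*} [AddCommGroup M]

theorem ker_pow_mono (τ : AddMonoid.End M) : Monotone fun i : ℕ => (τ ^ i).ker := by
  intro i j hij x (hx : (τ ^ i) x = 0)
  show (τ ^ j) x = 0
  rw [← Nat.sub_add_cancel hij, pow_add, coe_mul, Function.comp_apply, hx, map_zero]

theorem ker_pow_add_le_of_ker_pow_succ_le {τ : AddMonoid.End M} {i : ℕ}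
    (h : (τ ^ (i + 1)).ker ≤ (τ ^ i).ker) (j : ℕ) : (τ ^ (i + j)).ker ≤ (τ ^ i).ker := by
  induction j with
  | zero => rfl
  | succ j ih =>
    intro x (hx : (τ ^ (i + (j + 1))) x = 0)
    have hτx : (τ ^ i) (τ x) = 0 := ih (by rwa [← add_assoc, pow_succ] at hx)
    exact h (show (τ ^ (i + 1)) x = 0 by rwa [pow_succ])

theorem ker_pow_lt_ker_pow_succ {τ : AddMonoid.End M} {n i : ℕ} (hn : τ ^ n = 0)
    (hmin : ∀ m < n, τ ^ m ≠ 0) (hi : i < n) : (τ ^ i).ker < (τ ^ (i + 1)).ker := by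
  refine lt_of_le_not_ge (ker_pow_mono τ i.le_succ) fun h => hmin i hi ?_
  have := ker_pow_add_le_of_ker_pow_succ_le h (n - i)
  rw [Nat.add_sub_cancel' hi.le] at this
  ext x
  exact this (show (τ ^ n) x = 0 by rw [hn]; rfl)

section KerOfPrimeCard

variable {τ : AddMonoid.End M} {p n : ℕ} (hp : p.Prime) (hker : Nat.card τ.ker = p)
include hp hker

theorem relIndex_ker_pow_succ {i : ℕ} (h : (τ ^ i).ker < (τ ^ (i + 1)).ker) :
    (τ ^ i).ker.relIndex (τ ^ (i + 1)).ker = p := by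
  have hle : (τ ^ (i + 1)).ker.map (τ ^ i) ≤ τ.ker := by
    rintro _ ⟨x, hx : (τ ^ (i + 1)) x = 0, rfl⟩
    rwa [pow_succ'] at hx
  have hdvd : (τ ^ i).ker.relIndex (τ ^ (i + 1)).ker ∣ p :=
    (dvd_of_eq (AddSubgroup.relIndex_ker _ (τ ^ i))).trans (hker ▸ AddSubgroup.card_dvd_of_le hle)
  exact (hp.eq_one_or_self_of_dvd _ hdvd).resolve_left fun h1 =>
    h.not_ge (AddSubgroup.relIndex_eq_one.mp h1)

theorem relIndex_ker_pow (hn : τ ^ n = 0) (hmin : ∀ m < n, τ ^ m ≠ 0) {i j : ℕ} (hij : i ≤ j)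
    (hjn : j ≤ n) : (τ ^ i).ker.relIndex (τ ^ j).ker = p ^ (j - i) := by
  induction j, hij using Nat.le_induction with
  | base => rw [AddSubgroup.relIndex_self, Nat.sub_self, pow_zero]
  | succ j hij ih =>
    rw [← AddSubgroup.relIndex_mul_relIndex _ _ _ (ker_pow_mono τ hij) (ker_pow_mono τ j.le_succ),
      ih (by omega), relIndex_ker_pow_succ hp hker (ker_pow_lt_ker_pow_succ hn hmin (by omega)),
      ← pow_succ, Nat.sub_add_comm hij]

theorem card_ker_pow (hn : τ ^ n = 0) (hmin : ∀ m < n, τ ^ m ≠ 0) {i : ℕ} (hi : i ≤ n) :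
    Nat.card (τ ^ i).ker = p ^ i := by
  have hbot : (τ ^ 0).ker = ⊥ := (AddMonoidHom.ker_eq_bot_iff (τ ^ 0)).mpr fun _ _ h => h
  rw [← AddSubgroup.relIndex_bot_left, ← hbot, relIndex_ker_pow hp hker hn hmin i.zero_le hi,
    Nat.sub_zero]

theorem index_ker_pow (hn : τ ^ n = 0) (hmin : ∀ m < n, τ ^ m ≠ 0) {i : ℕ} (hi : i ≤ n) :
    (τ ^ i).ker.index = p ^ (n - i) := by
  have htop : (τ ^ n).ker = ⊤ := hn ▸ AddMonoidHom.ker_zero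
  rw [← AddSubgroup.relIndex_top_right, ← htop, relIndex_ker_pow hp hker hn hmin hi le_rfl]

theorem range_pow_eq_ker_pow [Finite M] (hn : τ ^ n = 0) (hmin : ∀ m < n, τ ^ m ≠ 0) {k : ℕ}
    (hk : k ≤ n) : (τ ^ k).range = (τ ^ (n - k)).ker := by
  refine AddSubgroup.eq_of_le_of_card_ge ?_ ?_
  · rintro _ ⟨x, rfl⟩
    show (τ ^ (n - k)) ((τ ^ k) x) = 0
    rw [← Function.comp_apply (f := τ ^ (n - k)), ← coe_mul, ← pow_add, Nat.sub_add_cancel hk, hn]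
    rfl
  · rw [card_ker_pow hp hker hn hmin (Nat.sub_le n k), ← index_ker_pow hp hker hn hmin hk]
    exact (AddSubgroup.index_ker (τ ^ k)).le

end KerOfPrimeCard

theorem range_mul_unit (f : AddMonoid.End M) (u : (AddMonoid.End M)ˣ) :
    (f * u).range = f.range := by
  refine le_antisymm (by rintro _ ⟨x, rfl⟩; exact ⟨(u : AddMonoid.End M) x, rfl⟩) ?_
  rintro _ ⟨x, rfl⟩
  exact ⟨(↑u⁻¹ : AddMonoid.End M) x, congrArg f (DFunLike.congr_fun u.mul_inv x)⟩

end AddMonoid.End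

section Ppow

open AddMonoid.End

variable {M : Type*} [AddCommGroup M]

theorem ppow_range (f : AddMonoid.End M) (q : ℕ) :
    Ppow f.range q = ((q : AddMonoid.End M) * f).range :=
  AddMonoidHom.map_range _ _

theorem ppow_top (q : ℕ) : Ppow (⊤ : AddSubgroup M) q = (q : AddMonoid.End M).range :=
  (AddMonoidHom.range_eq_map _).symm

variable {τ : AddMonoid.End M} {p : ℕ} (hp : p.Prime)
  (hN : τ * ∑ k ∈ range p, (1 - τ) ^ k = 0)
include hp hN

theorem ppow_range_eq_range_pow (hτ : IsNilpotent τ) : Ppow τ.range p = (τ ^ p).range := by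
  obtain ⟨w, hsum⟩ := exists_unit_sum_one_sub_pow_eq hp hτ
  rw [hsum, mul_add, ← pow_succ', Nat.sub_add_cancel hp.one_lt.le, ← mul_assoc,
    ← (Nat.cast_commute p τ).eq] at hN
  have hpτ : (p : AddMonoid.End M) * τ = τ ^ p * ↑(-w⁻¹) := by
    rw [Units.val_neg, mul_neg, ← neg_mul, ← eq_neg_of_add_eq_zero_right hN, mul_assoc,
      Units.mul_inv, mul_one]
  rw [ppow_range, hpτ, range_mul_unit]

theorem ppow_top_eq_range_pow_pred [Finite M] (hker : Nat.card τ.ker = p) {n : ℕ}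
    (hn : τ ^ n = 0) (hmin : ∀ m < n, τ ^ m ≠ 0) (hpn : p < n) :
    Ppow ⊤ p = (τ ^ (p - 1)).range := by
  have hp1 := hp.one_lt
  obtain ⟨w, hsum⟩ := exists_unit_sum_one_sub_pow_eq hp ⟨n, hn⟩
  set N := ∑ k ∈ range p, (1 - τ) ^ k
  have hpw : (p : AddMonoid.End M) * w = N - τ ^ (p - 1) := by rw [hsum, add_sub_cancel_left]
  rw [ppow_top]
  apply le_antisymm
  · rw [← range_mul_unit _ w, hpw, range_pow_eq_ker_pow hp hker hn hmin (by omega : p - 1 ≤ n)]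
    have hzero : τ ^ (n - (p - 1)) * (N - τ ^ (p - 1)) = 0 := by
      rw [mul_sub, ← pow_add, Nat.sub_add_cancel (by omega), hn,
        show n - (p - 1) = n - p + 1 by omega, pow_succ, mul_assoc, hN, mul_zero, sub_zero]
    rintro _ ⟨x, rfl⟩
    exact DFunLike.congr_fun hzero x
  · have hNp : N.range ≤ (p : AddMonoid.End M).range :=
      calc N.range ≤ (τ ^ 1).ker := by
            rintro _ ⟨x, rfl⟩
            exact DFunLike.congr_fun (pow_one τ ▸ hN) x
        _ ≤ (τ ^ (n - p)).ker := ker_pow_mono τ (by omega : 1 ≤ n - p)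
        _ = Ppow τ.range p := by
          rw [ppow_range_eq_range_pow hp hN ⟨n, hn⟩, range_pow_eq_ker_pow hp hker hn hmin hpn.le]
        _ ≤ Ppow ⊤ p := AddSubgroup.map_mono le_top
        _ = (p : AddMonoid.End M).range := ppow_top p
    rintro _ ⟨x, rfl⟩
    rw [show τ ^ (p - 1) = N - p * w by rw [hpw, sub_sub_cancel]]
    exact sub_mem (hNp ⟨x, rfl⟩) ⟨(w : AddMonoid.End M) x, rfl⟩

end Ppow

theorem oneSubSigma_mul_sum_eq_zero {M : Type*} [AddCommGroup M] {p : ℕ} {σ : AddAut M}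
    (hσ : p • σ = 0) : oneSubSigma σ * ∑ k ∈ range p, (1 - oneSubSigma σ) ^ k = 0 := by
  have hpow : ∀ k : ℕ,
      (show AddMonoid.End M from σ.toAddMonoidHom) ^ k = (k • σ).toAddMonoidHom := by
    intro k
    induction k with
    | zero => rfl
    | succ k ih => rw [pow_succ, ih, succ_nsmul]; rfl
  rw [oneSubSigma, sub_sub_cancel, mul_neg_geom_sum, hpow, hσ]
  exact sub_self _

theorem stmt19_general {M : Type*} [AddCommGroup M] [Finite M] (p : ℕ) (hp : p.Prime)
    (σ : AddAut M) (hσ : p • σ = 0)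
    (hM1 : Nat.card (AddMonoidHom.ker (oneSubSigma σ)) = p)
    (n : ℕ) (hn : AddMonoidHom.ker ((oneSubSigma σ) ^ n) = ⊤)
    (hmin : ∀ m < n, AddMonoidHom.ker ((oneSubSigma σ) ^ m) ≠ ⊤)
    (hnp : p < n) :
    Nat.card (M ⧸ Ppow (⊤ : AddSubgroup M) p) = p ^ (p - 1) ∧
    Nat.card (↥(AddMonoidHom.ker ((oneSubSigma σ) ^ (n - 1))) ⧸
        (Ppow (AddMonoidHom.ker ((oneSubSigma σ) ^ (n - 1))) p).addSubgroupOf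
          (AddMonoidHom.ker ((oneSubSigma σ) ^ (n - 1)))) = p ^ (p - 1) ∧
    AddMonoidHom.ker ((oneSubSigma σ) ^ (n - 1)) =
      AddMonoidHom.range (oneSubSigma σ) := by
  have hp1 := hp.one_lt
  set τ := oneSubSigma σ
  have hτn : τ ^ n = 0 := AddMonoidHom.ker_eq_top_iff.mp hn
  have hτmin : ∀ m < n, τ ^ m ≠ 0 := fun m hm h => hmin m hm (AddMonoidHom.ker_eq_top_iff.mpr h)
  have hN := oneSubSigma_mul_sum_eq_zero hσ
  have hA : (τ ^ (n - 1)).ker = τ.range := by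
    simpa using (AddMonoid.End.range_pow_eq_ker_pow hp hM1 hτn hτmin (k := 1) (by omega)).symm
  have hpA : Ppow (τ ^ (n - 1)).ker p = (τ ^ (n - p)).ker := by
    rw [hA, ppow_range_eq_range_pow hp hN ⟨n, hτn⟩,
      AddMonoid.End.range_pow_eq_ker_pow hp hM1 hτn hτmin hnp.le]
  refine ⟨?_, ?_, hA⟩
  · rw [ppow_top_eq_range_pow_pred hp hN hM1 hτn hτmin hnp,
      AddMonoid.End.range_pow_eq_ker_pow hp hM1 hτn hτmin (by omega)]
    exact (AddMonoid.End.index_ker_pow hp hM1 hτn hτmin (by omega)).trans (by congr 1; omega)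
  · rw [hpA]
    exact (AddMonoid.End.relIndex_ker_pow hp hM1 hτn hτmin (by omega) (by omega)).trans
      (by congr 1; omega)

/-- For `G = ⟨σ⟩` of order `p` acting on a finite abelian `p`-group `M`, with
`#M^G = p`, nontrivial norm (`M^ν ≠ 1`), and `n` least with `ker((1-σ)^n) = M`
satisfying `n > p`: the `p`-rank of `M` equals the `p`-rank of
`M_{n-1} = ker((1-σ)^{n-1}) = (1-σ)M`, and both equal `p - 1`
(expressed here as `#(N/pN) = p^{p-1}` for `N = M` and `N = M_{n-1}`). -/
theorem stmt19 {M : Type*} [AddCommGroup M] [Finite M] (p : ℕ) (hp : p.Prime)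
    (σ : AddAut M) (hσ : p • σ = 0)
    (hpgrp : ∀ x : M, ∃ j : ℕ, p ^ j • x = 0)
    (hν : ∃ x : M, ∑ i ∈ Finset.range p, (i • σ) x ≠ 0)
    (hM1 : Nat.card (AddMonoidHom.ker (oneSubSigma σ)) = p)
    (n : ℕ) (hn : AddMonoidHom.ker ((oneSubSigma σ) ^ n) = ⊤)
    (hmin : ∀ m < n, AddMonoidHom.ker ((oneSubSigma σ) ^ m) ≠ ⊤)
    (hnp : p < n) :
    Nat.card (M ⧸ Ppow (⊤ : AddSubgroup M) p) = p ^ (p - 1) ∧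
    Nat.card (↥(AddMonoidHom.ker ((oneSubSigma σ) ^ (n - 1))) ⧸
        (Ppow (AddMonoidHom.ker ((oneSubSigma σ) ^ (n - 1))) p).addSubgroupOf
          (AddMonoidHom.ker ((oneSubSigma σ) ^ (n - 1)))) = p ^ (p - 1) ∧
    AddMonoidHom.ker ((oneSubSigma σ) ^ (n - 1)) =
      AddMonoidHom.range (oneSubSigma σ) :=
  stmt19_general p hp σ hσ hM1 n hn hmin hnp
end
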